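/- arXiv:2411.17419 — 2 statements merged into one kernel-verified Lean document; each statement's English description precedes it below -/
import Mathlib

section
/- Let H be a real Hilbert space, let μ ∈ ℝ and ρ < 0 with μρ < 1/4, and let z, w ∈ H with z ≠ 0. Then the inequality ⟨z, w⟩ ≥ μ‖z‖² + ρ‖w‖² holds if and only if the complex number c := (‖w‖/‖z‖)·(cos ∠(z,w) + i·sin ∠(z,w)) lies outside the open disk of center 1/(2ρ) and radius √(1 − 4μρ)/(2|ρ|), i.e. |c − 1/(2ρ)| ≥ √(1 − 4μρ)/(2|ρ|). -/
open Classical in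
/-- The angle between two vectors in a real Hilbert space: `arccos(⟪z,w⟫/(‖z‖‖w‖))`
if both are nonzero, and `0` otherwise. -/
noncomputable def vecAngle {H : Type*} [NormedAddCommGroup H] [InnerProductSpace ℝ H]
    (z w : H) : ℝ :=
  if z ≠ 0 ∧ w ≠ 0 then Real.arccos ((inner ℝ z w : ℝ) / (‖z‖ * ‖w‖)) else 0

/-!
The point `c` is `‖w‖/‖z‖ · e^{i∠(z,w)}`, so `‖c‖ = ‖w‖/‖z‖` and `Re c = ⟪z,w⟫/‖z‖²`. Dividing the
semimonotonicity inequality by `‖z‖²` turns it into `μ + ρ‖c‖² ≤ Re c`, and since `ρ < 0`,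
completing the square shows that this region is the complement of the open disk of center
`1/(2ρ)` and radius `√(1 - 4μρ)/(2|ρ|)`.
-/

open Complex InnerProductGeometry

section Angle

variable {H : Type*} [NormedAddCommGroup H] [InnerProductSpace ℝ H]

theorem vecAngle_eq_angle {z w : H} (hz : z ≠ 0) (hw : w ≠ 0) : vecAngle z w = angle z w := by
  simp [vecAngle, angle, hz, hw]

theorem norm_mul_norm_mul_cos_vecAngle (z w : H) :
    ‖z‖ * ‖w‖ * Real.cos (vecAngle z w) = inner ℝ z w := by
  by_cases hz : z = 0
  · simp [hz]
  by_cases hw : w = 0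
  · simp [hw]
  rw [vecAngle_eq_angle hz hw, mul_comm, cos_angle_mul_norm_mul_norm]

end Angle

theorem re_ofReal_mul_cos_add_sin_mul_I (r θ : ℝ) :
    ((r : ℂ) * ((Real.cos θ : ℂ) + (Real.sin θ : ℂ) * I)).re = r * Real.cos θ := by
  simp only [add_re, ofReal_re, mul_re, I_re, I_im, ofReal_im]
  ring

theorem norm_ofReal_mul_cos_add_sin_mul_I (r θ : ℝ) :
    ‖(r : ℂ) * ((Real.cos θ : ℂ) + (Real.sin θ : ℂ) * I)‖ = |r| := by
  rw [norm_mul, ofReal_cos, ofReal_sin, norm_cos_add_sin_mul_I, norm_real, mul_one,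
    Real.norm_eq_abs]

theorem sqrt_div_two_abs_le_norm_sub_iff {μ ρ : ℝ} (hρ : ρ < 0) (hμρ : μ * ρ ≤ 1 / 4) (c : ℂ) :
    Real.sqrt (1 - 4 * μ * ρ) / (2 * |ρ|) ≤ ‖c - ((1 / (2 * ρ) : ℝ) : ℂ)‖ ↔
      μ + ρ * ‖c‖ ^ 2 ≤ c.re := by
  have hρ0 : ρ ≠ 0 := hρ.ne
  have hrad : 0 ≤ 1 - 4 * μ * ρ := by linarith
  have hsq_radius :
      (Real.sqrt (1 - 4 * μ * ρ) / (2 * |ρ|)) ^ 2 = (1 - 4 * μ * ρ) / (4 * ρ ^ 2) := by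
    rw [div_pow, Real.sq_sqrt hrad, mul_pow, sq_abs]
    norm_num
  have hsq_dist : ‖c - ((1 / (2 * ρ) : ℝ) : ℂ)‖ ^ 2 = ‖c‖ ^ 2 - c.re / ρ + 1 / (4 * ρ ^ 2) := by
    rw [Complex.sq_norm, Complex.sq_norm, normSq_sub, normSq_ofReal, conj_ofReal, re_mul_ofReal]
    field_simp
    ring
  have hdiff : ‖c - ((1 / (2 * ρ) : ℝ) : ℂ)‖ ^ 2 - (Real.sqrt (1 - 4 * μ * ρ) / (2 * |ρ|)) ^ 2 =
      (μ + ρ * ‖c‖ ^ 2 - c.re) / ρ := by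
    rw [hsq_dist, hsq_radius]
    field_simp
    ring
  rw [← pow_le_pow_iff_left₀ (by positivity) (norm_nonneg _) two_ne_zero, ← sub_nonneg, hdiff,
    le_div_iff_of_neg hρ, zero_mul, sub_nonpos]

theorem stmt_1_general {H : Type*} [NormedAddCommGroup H] [InnerProductSpace ℝ H]
    (μ ρ : ℝ) (hρ : ρ < 0) (hμρ : μ * ρ < 1 / 4) (z w : H) (hz : z ≠ 0) :
    (inner ℝ z w : ℝ) ≥ μ * ‖z‖ ^ 2 + ρ * ‖w‖ ^ 2 ↔
      ‖
          ((‖w‖ / ‖z‖ : ℝ) : ℂ) *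
              ((Real.cos (vecAngle z w) : ℂ) + (Real.sin (vecAngle z w) : ℂ) * Complex.I) -
            ((1 / (2 * ρ) : ℝ) : ℂ)‖ ≥
        Real.sqrt (1 - 4 * μ * ρ) / (2 * |ρ|) := by
  have hz' : 0 < ‖z‖ := norm_pos_iff.mpr hz
  rw [ge_iff_le, ge_iff_le, sqrt_div_two_abs_le_norm_sub_iff hρ hμρ.le,
    re_ofReal_mul_cos_add_sin_mul_I, norm_ofReal_mul_cos_add_sin_mul_I,
    abs_of_nonneg (by positivity), ← norm_mul_norm_mul_cos_vecAngle z w]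
  have hlhs : μ + ρ * (‖w‖ / ‖z‖) ^ 2 = (μ * ‖z‖ ^ 2 + ρ * ‖w‖ ^ 2) / ‖z‖ ^ 2 := by field_simp
  have hrhs : ‖w‖ / ‖z‖ * Real.cos (vecAngle z w) =
      ‖z‖ * ‖w‖ * Real.cos (vecAngle z w) / ‖z‖ ^ 2 := by field_simp
  rw [hlhs, hrhs, div_le_div_iff_of_pos_right (pow_pos hz' 2)]

theorem stmt_1 {H : Type*} [NormedAddCommGroup H] [InnerProductSpace ℝ H] [CompleteSpace H]
    (μ ρ : ℝ) (hρ : ρ < 0) (hμρ : μ * ρ < 1 / 4) (z w : H) (hz : z ≠ 0) :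
    (inner ℝ z w : ℝ) ≥ μ * ‖z‖ ^ 2 + ρ * ‖w‖ ^ 2 ↔
      ‖
          ((‖w‖ / ‖z‖ : ℝ) : ℂ) *
              ((Real.cos (vecAngle z w) : ℂ) + (Real.sin (vecAngle z w) : ℂ) * Complex.I) -
            ((1 / (2 * ρ) : ℝ) : ℂ)‖ ≥
        Real.sqrt (1 - 4 * μ * ρ) / (2 * |ρ|) :=
  stmt_1_general μ ρ hρ hμρ z w hz
end

section
/- Let α_R, α_F ∈ [0,1), let R be the real 2×2 matrix with rows (1, −α_R) and (−α_F, 1), let T_D : ℝ ⇒ ℝ be a monotone set-valued operator, and define the Ebers–Moll operator T_NPN : ℝ² ⇒ ℝ² by T_NPN(v₁,v₂) := {R·(u₁,u₂) : u₁ ∈ T_D(v₁), u₂ ∈ T_D(v₂)}. Then T_NPN is θ-angle-bounded with θ := π/2 + max(arctan(α_F), arctan(α_R)); that is, ⟨x − y, u − v⟩ ≥ cos(θ)·‖x − y‖·‖u − v‖ for all (x,u), (y,v) in the graph of T_NPN (Euclidean inner product and norm on ℝ²). -/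
/-- The Ebers–Moll matrix with rows `(1, -αR)` and `(-αF, 1)`, applied to a vector of
`ℝ²` (with the Euclidean inner product and norm). -/
noncomputable def applyEM (aR aF : ℝ) (w : EuclideanSpace ℝ (Fin 2)) :
    EuclideanSpace ℝ (Fin 2) :=
  (WithLp.equiv 2 (Fin 2 → ℝ)).symm
    ((Matrix.of ![![1, -aR], ![-aF, 1]]).mulVec (WithLp.equiv 2 (Fin 2 → ℝ) w))

/-- A set-valued operator `T_D : ℝ ⇒ ℝ` is monotone if `(u - v)(x - y) ≥ 0` whenever
`u ∈ T_D(x)` and `v ∈ T_D(y)`. -/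
def MonotoneSetValued (TD : ℝ → Set ℝ) : Prop :=
  ∀ ⦃x u y v : ℝ⦄, u ∈ TD x → v ∈ TD y → (u - v) * (x - y) ≥ 0

/-- The Ebers–Moll transistor operator `T_NPN : ℝ² ⇒ ℝ²` built from the diode law `T_D`. -/
noncomputable def TNPN (aR aF : ℝ) (TD : ℝ → Set ℝ) (v : EuclideanSpace ℝ (Fin 2)) :
    Set (EuclideanSpace ℝ (Fin 2)) :=
  {w | ∃ u₁ ∈ TD (v 0), ∃ u₂ ∈ TD (v 1),
    w = applyEM aR aF ((WithLp.equiv 2 (Fin 2 → ℝ)).symm ![u₁, u₂])}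

/-- A set-valued operator `A` on a real Hilbert space is `θ`-angle-bounded if
`⟪x - y, u - v⟫ ≥ cos(θ)‖x - y‖‖u - v‖` for all `(x,u)`, `(y,v)` in its graph. -/
def AngleBounded {H : Type*} [NormedAddCommGroup H] [InnerProductSpace ℝ H]
    (θ : ℝ) (A : H → Set H) : Prop :=
  ∀ ⦃x u y v : H⦄, u ∈ A x → v ∈ A y →
    (inner ℝ (x - y) (u - v) : ℝ) ≥ Real.cos θ * (‖x - y‖ * ‖u - v‖)

/-!
Put `d = x - y`, let `p` be the difference of the diode currents and `w = R p`, so that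
monotonicity of `T_D` gives `dᵢ pᵢ ≥ 0`. A coordinate with `dᵢ wᵢ < 0` then has `pᵢ wᵢ ≤ 0`, which
forces `|w₀| ≤ α_R |w₁|` (resp. `|w₁| ≤ α_F |w₀|`), i.e. `|wᵢ| ≤ sin (arctan α) ‖w‖` with
`α = max α_R α_F`; and as `α_R α_F < 1`, the two coordinates cannot both be of this kind. So
`⟪d, w⟫` is at least its only negative term, which is `≥ -sin (arctan α) ‖d‖ ‖w‖ = cos θ ‖d‖ ‖w‖`.
-/

open Real

theorem neg_mul_norm_mul_norm_le_inner_of_unique_neg {ι : Type*} [Fintype ι] {s : ℝ}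
    (hs : 0 ≤ s) {d w : EuclideanSpace ℝ ι}
    (hbound : ∀ i, d i * w i < 0 → |w i| ≤ s * ‖w‖)
    (hunique : ∀ i j, d i * w i < 0 → d j * w j < 0 → i = j) :
    -(s * (‖d‖ * ‖w‖)) ≤ inner ℝ d w := by
  classical
  have hinner : inner ℝ d w = ∑ i, d i * w i := by
    simp [PiLp.inner_apply, mul_comm]
  rw [hinner]
  by_cases hneg : ∃ i, d i * w i < 0
  · obtain ⟨i, hi⟩ := hneg
    have hrest : 0 ≤ ∑ j ∈ Finset.univ.erase i, d j * w j :=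
      Finset.sum_nonneg fun j hj => not_lt.1 fun hj' =>
        Finset.ne_of_mem_erase hj (hunique j i hj' hi)
    have hdi : |d i| ≤ ‖d‖ := by simpa using PiLp.norm_apply_le d i
    calc -(s * (‖d‖ * ‖w‖)) = -(‖d‖ * (s * ‖w‖)) := by ring
      _ ≤ -(|d i| * |w i|) :=
          neg_le_neg (mul_le_mul hdi (hbound i hi) (abs_nonneg _) (norm_nonneg _))
      _ ≤ d i * w i := by rw [← abs_mul]; exact neg_abs_le _
      _ ≤ ∑ j, d j * w j := by
          rw [← Finset.add_sum_erase _ _ (Finset.mem_univ i)]; linarith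
  · push Not at hneg
    have : 0 ≤ s * (‖d‖ * ‖w‖) := by positivity
    linarith [Finset.sum_nonneg fun j (_ : j ∈ Finset.univ) => hneg j]

theorem abs_sub_mul_le_mul_abs_sub_mul {a b x y : ℝ} (ha : 0 ≤ a) (hab : a * b ≤ 1)
    (hx : x * (x - a * y) ≤ 0) : |x - a * y| ≤ a * |y - b * x| := by
  wlog hx0 : 0 ≤ x generalizing x y
  · have := this (x := -x) (y := -y) (by nlinarith) (by linarith)
    rwa [show -x - a * -y = -(x - a * y) by ring, show -y - b * -x = -(y - b * x) by ring,
      abs_neg, abs_neg] at this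
  rcases hx0.eq_or_lt with rfl | hxpos
  · simp [abs_mul, abs_of_nonneg ha]
  · have hxy : x ≤ a * y := by nlinarith
    have hy0 : 0 < y := by nlinarith
    have hy : 0 ≤ y - b * x := by
      rcases le_total 0 b with hb | hb
      · nlinarith [mul_le_mul_of_nonneg_left hxy hb]
      · nlinarith
    rw [abs_of_nonpos (by linarith), abs_of_nonneg hy]
    nlinarith

theorem eq_zero_of_mul_sub_mul_nonpos {a b x y : ℝ} (hab : a * b < 1)
    (hx : x * (x - a * y) ≤ 0) (hy : y * (y - b * x) ≤ 0) : x = 0 ∧ y = 0 := by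
  have hx' : x ^ 2 ≤ a * (x * y) := by linarith
  have hy' : y ^ 2 ≤ b * (x * y) := by linarith
  have hprod : (x * y) ^ 2 ≤ a * b * (x * y) ^ 2 := by
    nlinarith [mul_le_mul hx' hy' (sq_nonneg y) ((sq_nonneg x).trans hx')]
  have hxy : x * y = 0 := by
    by_contra hne
    have : 0 < (x * y) ^ 2 := by positivity
    nlinarith
  rw [hxy, mul_zero] at hx' hy'
  exact ⟨pow_eq_zero_iff two_ne_zero |>.1 (le_antisymm hx' (sq_nonneg x)),
    pow_eq_zero_iff two_ne_zero |>.1 (le_antisymm hy' (sq_nonneg y))⟩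

theorem abs_le_sin_arctan_mul_sqrt {t x y : ℝ} (ht : 0 ≤ t) (h : |x| ≤ t * |y|) :
    |x| ≤ sin (arctan t) * √(x ^ 2 + y ^ 2) := by
  rw [sin_arctan, div_mul_eq_mul_div, le_div_iff₀ (by positivity)]
  rw [← pow_le_pow_iff_left₀ (by positivity) (by positivity) two_ne_zero, mul_pow, mul_pow,
    sq_sqrt (by positivity), sq_sqrt (by positivity), sq_abs]
  have : x ^ 2 ≤ t ^ 2 * y ^ 2 := by
    rw [← sq_abs x, ← sq_abs y, ← mul_pow]; exact pow_le_pow_left₀ (abs_nonneg _) h 2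
  nlinarith

theorem mul_nonpos_of_mul_nonneg_of_mul_neg {d p w : ℝ} (hdp : 0 ≤ d * p) (hdw : d * w < 0) :
    p * w ≤ 0 := by
  have hd : 0 < d ^ 2 := by
    have : d ≠ 0 := by rintro rfl; simp at hdw
    positivity
  nlinarith [mul_nonpos_of_nonneg_of_nonpos hdp hdw.le]

theorem EuclideanSpace.norm_eq_sqrt_fin_two (w : EuclideanSpace ℝ (Fin 2)) :
    ‖w‖ = √(w 0 ^ 2 + w 1 ^ 2) := by
  simp [EuclideanSpace.norm_eq, Fin.sum_univ_two]

section EbersMoll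

variable {aR aF : ℝ}

theorem applyEM_apply_zero (w : EuclideanSpace ℝ (Fin 2)) :
    applyEM aR aF w 0 = w 0 - aR * w 1 := by
  simp [applyEM, dotProduct, Fin.sum_univ_two, sub_eq_add_neg]

theorem applyEM_apply_one (w : EuclideanSpace ℝ (Fin 2)) :
    applyEM aR aF w 1 = w 1 - aF * w 0 := by
  simp [applyEM, dotProduct, Fin.sum_univ_two, sub_eq_add_neg, add_comm]

theorem applyEM_sub (v w : EuclideanSpace ℝ (Fin 2)) :
    applyEM aR aF v - applyEM aR aF w = applyEM aR aF (v - w) := by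
  ext i
  fin_cases i
  · simp only [Fin.zero_eta, PiLp.sub_apply, applyEM_apply_zero]; ring
  · simp only [Fin.mk_one, PiLp.sub_apply, applyEM_apply_one]; ring

theorem neg_sin_mul_norm_mul_norm_le_inner_applyEM (haR : 0 ≤ aR) (haF : 0 ≤ aF)
    (hprod : aR * aF < 1) {d p : EuclideanSpace ℝ (Fin 2)} (hdp : ∀ i, 0 ≤ d i * p i) :
    -(sin (max (arctan aF) (arctan aR)) * (‖d‖ * ‖applyEM aR aF p‖)) ≤
      inner ℝ d (applyEM aR aF p) := by
  set s := sin (max (arctan aF) (arctan aR))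
  set w := applyEM aR aF p
  have hw0 : w 0 = p 0 - aR * p 1 := applyEM_apply_zero p
  have hw1 : w 1 = p 1 - aF * p 0 := applyEM_apply_one p
  have hmax : max (arctan aF) (arctan aR) ≤ π / 2 :=
    max_le (arctan_lt_pi_div_two _).le (arctan_lt_pi_div_two _).le
  have hsin : ∀ t, arctan t ≤ max (arctan aF) (arctan aR) → sin (arctan t) ≤ s := fun t ht =>
    sin_le_sin_of_le_of_le_pi_div_two (neg_pi_div_two_lt_arctan t).le hmax ht
  have hs : 0 ≤ s := (by rw [sin_arctan]; positivity : 0 ≤ sin (arctan aF)).trans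
    (hsin aF (le_max_left _ _))
  have hpw : ∀ i, d i * w i < 0 → p i * w i ≤ 0 := fun i =>
    mul_nonpos_of_mul_nonneg_of_mul_neg (hdp i)
  apply neg_mul_norm_mul_norm_le_inner_of_unique_neg hs
  · intro i hi
    rw [EuclideanSpace.norm_eq_sqrt_fin_two]
    fin_cases i
    · have h := abs_sub_mul_le_mul_abs_sub_mul (b := aF) haR (by linarith) (hw0 ▸ hpw 0 hi)
      rw [← hw0, ← hw1] at h
      exact (abs_le_sin_arctan_mul_sqrt haR h).trans
        (mul_le_mul_of_nonneg_right (hsin aR (le_max_right _ _)) (sqrt_nonneg _))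
    · have h := abs_sub_mul_le_mul_abs_sub_mul (b := aR) haF (by linarith) (hw1 ▸ hpw 1 hi)
      rw [← hw0, ← hw1] at h
      rw [add_comm]
      exact (abs_le_sin_arctan_mul_sqrt haF h).trans
        (mul_le_mul_of_nonneg_right (hsin aF (le_max_left _ _)) (sqrt_nonneg _))
  · intro i j hi hj
    by_contra hij
    obtain ⟨h0, h1⟩ : d 0 * w 0 < 0 ∧ d 1 * w 1 < 0 := by
      fin_cases i <;> fin_cases j <;> simp_all
    obtain ⟨hp0, hp1⟩ :=
      eq_zero_of_mul_sub_mul_nonpos hprod (hw0 ▸ hpw 0 h0) (hw1 ▸ hpw 1 h1)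
    simp [hw0, hp0, hp1] at h0

end EbersMoll

theorem stmt_12 (aR aF : ℝ) (haR : aR ∈ Set.Ico (0 : ℝ) 1) (haF : aF ∈ Set.Ico (0 : ℝ) 1)
    (TD : ℝ → Set ℝ) (hTD : MonotoneSetValued TD) :
    AngleBounded (Real.pi / 2 + max (Real.arctan aF) (Real.arctan aR)) (TNPN aR aF TD) := by
  rintro x - y - ⟨u₁, hu₁, u₂, hu₂, rfl⟩ ⟨v₁, hv₁, v₂, hv₂, rfl⟩
  have hprod : aR * aF < 1 := by nlinarith [haR.1, haR.2, haF.1, haF.2]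
  rw [applyEM_sub, ge_iff_le, add_comm, cos_add_pi_div_two, neg_mul]
  refine neg_sin_mul_norm_mul_norm_le_inner_applyEM haR.1 haF.1 hprod fun i => ?_
  fin_cases i
  · simpa [mul_comm] using hTD hu₁ hv₁
  · simpa [mul_comm] using hTD hu₂ hv₂
end
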